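/- Let T = (Q, Σ, q0, δ) be a deterministic partial transition system with Q and Σ finite and nonempty, where δ : Q × Σ → Q is a partial function. Let C ⊆ Q be a nonempty strongly connected set of states (for all p, q ∈ C there exists a nonempty finite word w with δ*(p, w) = q) that contains at least one internal transition and is reachable from q0 (there is a finite word reaching a state of C from q0). Then there exist a finite word u with |u| < |Q| and a nonempty finite word v with |v| ≤ |Σ|·|Q|² such that the run of T on u v^ω from q0 is infinite (all required transitions are defined) and this run takes every transition (p, a) with p ∈ C, δ(p, a) defined and δ(p, a) ∈ C infinitely often. -/

import Mathlib

/-- The ultimately periodic word `u v^ω` (for `v` nonempty) as a function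
`ℕ → α`. -/
def upWord {α : Type*} (u v : List α) (hv : v ≠ []) : ℕ → α :=
  fun n =>
    if h : n < u.length then u.get ⟨n, h⟩
    else v.get ⟨(n - u.length) % v.length, Nat.mod_lt _ (List.length_pos_iff.mpr hv)⟩

/-- Extension `δ*` of a partial transition function to finite words. -/
def deltaStar {Q A : Type*} (δ : Q → A → Option Q) : Q → List A → Option Q
  | q, [] => some q
  | q, a :: w => (δ q a).bind (fun q' => deltaStar δ q' w)

/-- The (possibly finite) run of a deterministic partial transition system on
an infinite word: `runP δ q0 w n` is the state after `n` steps, `none` if some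
required transition is undefined. -/
def runP {Q A : Type*} (δ : Q → A → Option Q) (q0 : Q) (w : ℕ → A) : ℕ → Option Q
  | 0 => some q0
  | n + 1 => (runP δ q0 w n).bind (fun q => δ q (w n))

/-!
Every word between two states of `C` can be shortened below `|Q|` by cutting out a loop between
two equal intermediate states. List the internal transitions of `C` as `(p₁, a₁), …, (pₖ, aₖ)`,
so `k ≤ |Q|·|Σ|`, and let `v = a₁ w₁ a₂ w₂ ⋯ aₖ wₖ`, where `wᵢ` is a short word from
`δ(pᵢ, aᵢ)` to `pᵢ₊₁` (and `pₖ₊₁ = p₁`). Then `v` is a closed walk at `p₁` of length at most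
`k·|Q|` through every internal transition, and for a short word `u` from `q0` to `p₁` the run on
`u v^ω` traverses this closed walk forever.
-/

section DeltaStar

variable {Q A : Type*} (δ : Q → A → Option Q)

theorem deltaStar_append (p : Q) (x y : List A) :
    deltaStar δ p (x ++ y) = (deltaStar δ p x).bind (deltaStar δ · y) := by
  induction x generalizing p with
  | nil => rfl
  | cons a x ih => simp only [List.cons_append, deltaStar, ih, Option.bind_assoc]

theorem deltaStar_cons_of_eq_some {p q : Q} {a : A} (h : δ p a = some q) (w : List A) :
    deltaStar δ p (a :: w) = deltaStar δ q w := by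
  simp [deltaStar, h]

theorem deltaStar_append_of_eq_some {p q : Q} {x : List A} (h : deltaStar δ p x = some q)
    (y : List A) : deltaStar δ p (x ++ y) = deltaStar δ q y := by
  rw [deltaStar_append, h, Option.bind_some]

theorem deltaStar_append_eq_some_iff {p r : Q} {x y : List A} :
    deltaStar δ p (x ++ y) = some r ↔
      ∃ q, deltaStar δ p x = some q ∧ deltaStar δ q y = some r := by
  rw [deltaStar_append, Option.bind_eq_some_iff]

theorem deltaStar_take_ne_none {p r : Q} {w : List A} (h : deltaStar δ p w = some r) (i : ℕ) :
    deltaStar δ p (w.take i) ≠ none := by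
  rw [← List.take_append_drop i w, deltaStar_append_eq_some_iff] at h
  obtain ⟨q, hq, -⟩ := h
  simp [hq]

theorem exists_shorter_deltaStar_of_card_le [Fintype Q] {p r : Q} {w : List A}
    (hw : Fintype.card Q ≤ w.length) (h : deltaStar δ p w = some r) :
    ∃ w', w'.length < w.length ∧ deltaStar δ p w' = some r := by
  have hsplit (i : ℕ) :
      ∃ q, deltaStar δ p (w.take i) = some q ∧ deltaStar δ q (w.drop i) = some r := by
    rwa [← deltaStar_append_eq_some_iff, List.take_append_drop]
  choose st hpre hsuf using hsplit
  have cut (i j : ℕ) (hij : i < j) (hj : j ≤ w.length) (heq : st i = st j) :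
      ∃ w', w'.length < w.length ∧ deltaStar δ p w' = some r :=
    ⟨w.take i ++ w.drop j, by simp; omega,
      by rw [deltaStar_append_of_eq_some δ (hpre i), heq, hsuf j]⟩
  obtain ⟨i, hi, j, hj, hij, heq⟩ := Finset.exists_ne_map_eq_of_card_lt_of_maps_to
    (s := Finset.range (Fintype.card Q + 1)) (t := (Finset.univ : Finset Q)) (by simp)
    (fun i _ => Finset.mem_univ (st i))
  rw [Finset.mem_range] at hi hj
  rcases lt_or_gt_of_ne hij with hlt | hlt
  · exact cut i j hlt (by omega) heq
  · exact cut j i hlt (by omega) heq.symm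

theorem exists_deltaStar_eq_some_length_lt_card [Fintype Q] {p r : Q} {w : List A}
    (h : deltaStar δ p w = some r) :
    ∃ w', w'.length < Fintype.card Q ∧ deltaStar δ p w' = some r := by
  by_cases hw : w.length < Fintype.card Q
  · exact ⟨w, hw, h⟩
  obtain ⟨w', hlt, h'⟩ := exists_shorter_deltaStar_of_card_le δ (not_lt.1 hw) h
  exact exists_deltaStar_eq_some_length_lt_card h'
termination_by w.length

end DeltaStar

section InternalTransitions

variable {Q A : Type*} (δ : Q → A → Option Q)

def IsInternalTransition (C : Set Q) (t : Q × A) : Prop :=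
  t.1 ∈ C ∧ ∃ q ∈ C, δ t.1 t.2 = some q

theorem exists_path_through_internalTransitions {C : Set Q} {N : ℕ}
    (hconn : ∀ p ∈ C, ∀ q ∈ C, ∃ w : List A, w.length < N ∧ deltaStar δ p w = some q)
    {r : Q} (hr : r ∈ C) (t : Q × A) (ts : List (Q × A)) (ht : IsInternalTransition δ C t)
    (hts : ∀ s ∈ ts, IsInternalTransition δ C s) :
    ∃ v, deltaStar δ t.1 v = some r ∧ v.length ≤ (ts.length + 1) * N ∧
      ∀ s ∈ t :: ts, ∃ x y, v = x ++ s.2 :: y ∧ deltaStar δ t.1 x = some s.1 := by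
  obtain ⟨-, q, hq, hδ⟩ := ht
  induction ts generalizing t q with
  | nil =>
    obtain ⟨w, hwN, hw⟩ := hconn q hq r hr
    refine ⟨t.2 :: w, by rwa [deltaStar_cons_of_eq_some δ hδ], by simpa, ?_⟩
    simp only [List.mem_singleton, forall_eq]
    exact ⟨[], w, rfl, rfl⟩
  | cons s ts ih =>
    obtain ⟨hs, q', hq', hδ'⟩ := hts s List.mem_cons_self
    obtain ⟨w, hwN, hw⟩ := hconn q hq s.1 hs
    obtain ⟨v, hvr, hvlen, hcover⟩ :=
      ih s (fun s' hs' => hts s' (List.mem_cons_of_mem s hs')) q' hq' hδ'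
    have hrun (x : List A) : deltaStar δ t.1 (t.2 :: (w ++ x)) = deltaStar δ s.1 x := by
      rw [deltaStar_cons_of_eq_some δ hδ, deltaStar_append_of_eq_some δ hw]
    refine ⟨t.2 :: (w ++ v), by rw [hrun, hvr], ?_, ?_⟩
    · simp only [List.length_cons, List.length_append]
      nlinarith
    · rintro s' (_ | ⟨_, hs'⟩)
      · exact ⟨[], w ++ v, rfl, rfl⟩
      · obtain ⟨x, y, rfl, hx⟩ := hcover s' hs'
        exact ⟨t.2 :: (w ++ x), y, by simp, by rw [hrun, hx]⟩

theorem exists_cycle_through_internalTransitions [Fintype Q] [Fintype A] {C : Set Q} {N : ℕ}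
    (hconn : ∀ p ∈ C, ∀ q ∈ C, ∃ w : List A, w.length < N ∧ deltaStar δ p w = some q)
    {p : Q} {a : A} (hpa : IsInternalTransition δ C (p, a)) :
    ∃ v, deltaStar δ p v = some p ∧ v.length ≤ Fintype.card Q * Fintype.card A * N ∧
      ∀ t, IsInternalTransition δ C t → ∃ x y, v = x ++ t.2 :: y ∧ deltaStar δ p x = some t.1 := by
  classical
  set F := Finset.univ.filter (IsInternalTransition δ C)
  have hpaF : (p, a) ∈ F := by simpa [F] using hpa
  obtain ⟨v, hloop, hvlen, hcover⟩ := exists_path_through_internalTransitions δ hconn hpa.1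
    (p, a) (F.erase (p, a)).toList hpa (by simp [F])
  refine ⟨v, hloop, ?_, fun t ht => hcover t ?_⟩
  · calc v.length ≤ ((F.erase (p, a)).toList.length + 1) * N := hvlen
      _ = F.card * N := by rw [Finset.length_toList, Finset.card_erase_add_one hpaF]
      _ ≤ Fintype.card (Q × A) * N := by gcongr; exact F.card_le_univ
      _ = Fintype.card Q * Fintype.card A * N := by rw [Fintype.card_prod]
  · by_cases h : t = (p, a)
    · simp [h]
    · simpa [F, h] using ht

end InternalTransitions

section UltimatelyPeriodicRun

variable {Q A : Type*} (δ : Q → A → Option Q)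

theorem runP_add_eq_bind {q : Q} {w : ℕ → A} {m : ℕ} {l : List A}
    (hw : ∀ i (hi : i < l.length), w (m + i) = l[i]) {j : ℕ} (hj : j ≤ l.length) :
    runP δ q w (m + j) = (runP δ q w m).bind (deltaStar δ · (l.take j)) := by
  induction j with
  | zero => simp [deltaStar]
  | succ j ih =>
    rw [← add_assoc, runP, ih (by omega), hw j (by omega), ← List.take_concat_get' l j (by omega)]
    simp only [deltaStar_append, Option.bind_assoc, deltaStar, Option.bind_fun_some]

theorem upWord_of_lt {α : Type*} {u v : List α} (hv : v ≠ []) {n : ℕ} (hn : n < u.length) :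
    upWord u v hv n = u[n] := by
  simp [upWord, hn]

theorem upWord_add_mul_add {α : Type*} {u v : List α} (hv : v ≠ []) (k : ℕ) {j : ℕ}
    (hj : j < v.length) : upWord u v hv (u.length + k * v.length + j) = v[j] := by
  simp [upWord, add_assoc, Nat.mod_eq_of_lt hj]

variable {q0 r : Q} {u v : List A} (hv : v ≠ [])

theorem runP_upWord_of_le {n : ℕ} (hn : n ≤ u.length) :
    runP δ q0 (upWord u v hv) n = deltaStar δ q0 (u.take n) := by
  simpa [runP] using
    runP_add_eq_bind δ (m := 0) (fun i hi => by simpa using upWord_of_lt hv hi) hn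

theorem runP_upWord_add_mul_add (hu : deltaStar δ q0 u = some r)
    (hloop : deltaStar δ r v = some r) (k : ℕ) {j : ℕ} (hj : j ≤ v.length) :
    runP δ q0 (upWord u v hv) (u.length + k * v.length + j) = deltaStar δ r (v.take j) := by
  have hstep (k j : ℕ) (hj : j ≤ v.length) :
      runP δ q0 (upWord u v hv) (u.length + k * v.length + j) =
        (runP δ q0 (upWord u v hv) (u.length + k * v.length)).bind (deltaStar δ · (v.take j)) :=
    runP_add_eq_bind δ (fun i hi => upWord_add_mul_add hv k hi) hj
  have hstart (k : ℕ) : runP δ q0 (upWord u v hv) (u.length + k * v.length) = some r := by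
    induction k with
    | zero => simpa [hu] using runP_upWord_of_le δ (q0 := q0) hv (le_refl u.length)
    | succ k ih =>
      rw [add_one_mul, ← add_assoc, hstep k _ le_rfl, ih, Option.bind_some, List.take_length,
        hloop]
  rw [hstep k j hj, hstart k, Option.bind_some]

theorem runP_upWord_ne_none (hu : deltaStar δ q0 u = some r)
    (hloop : deltaStar δ r v = some r) (n : ℕ) : runP δ q0 (upWord u v hv) n ≠ none := by
  rcases lt_or_ge n u.length with hn | hn
  · rw [runP_upWord_of_le δ hv hn.le]
    exact deltaStar_take_ne_none δ hu n
  · obtain ⟨m, rfl⟩ := Nat.exists_eq_add_of_le hn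
    have hmod := Nat.mod_lt m (List.length_pos_iff.2 hv)
    rw [← Nat.div_add_mod' m v.length, ← add_assoc,
      runP_upWord_add_mul_add δ hv hu hloop _ hmod.le]
    exact deltaStar_take_ne_none δ hloop _

theorem infinite_setOf_runP_upWord_eq (hu : deltaStar δ q0 u = some r)
    (hloop : deltaStar δ r v = some r) {x y : List A} {p : Q} {a : A} (hxy : v = x ++ a :: y)
    (hx : deltaStar δ r x = some p) :
    {n | runP δ q0 (upWord u v hv) n = some p ∧ upWord u v hv n = a}.Infinite := by
  subst hxy
  have hlt : x.length < (x ++ a :: y).length := by simp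
  refine Set.infinite_of_injective_forall_mem
    (f := fun k => u.length + k * (x ++ a :: y).length + x.length)
    (fun k₁ k₂ h => Nat.eq_of_mul_eq_mul_right (Nat.zero_lt_of_lt hlt) (by simpa using h))
    (fun k => ⟨?_, ?_⟩)
  · rw [runP_upWord_add_mul_add δ hv hu hloop k hlt.le, List.take_left, hx]
  · rw [upWord_add_mul_add hv k hlt]
    simp

end UltimatelyPeriodicRun

theorem exists_upWord_visiting_scc {Q A : Type*}
    [Fintype Q] [Fintype A]
    (δ : Q → A → Option Q) (q0 : Q) (C : Set Q)
    (hconn : ∀ p ∈ C, ∀ q ∈ C, ∃ w : List A, w ≠ [] ∧ deltaStar δ p w = some q)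
    (hint : ∃ p ∈ C, ∃ a : A, ∃ q ∈ C, δ p a = some q)
    (hreach : ∃ w : List A, ∃ q ∈ C, deltaStar δ q0 w = some q) :
    ∃ (u v : List A) (hv : v ≠ []),
      u.length < Fintype.card Q ∧
      v.length ≤ Fintype.card A * Fintype.card Q ^ 2 ∧
      (∀ n, runP δ q0 (upWord u v hv) n ≠ none) ∧
      ∀ p ∈ C, ∀ a : A, ∀ q ∈ C, δ p a = some q →
        {n | runP δ q0 (upWord u v hv) n = some p ∧
          upWord u v hv n = a}.Infinite := by
  have hshort (p : Q) (hp : p ∈ C) (q : Q) (hq : q ∈ C) :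
      ∃ w : List A, w.length < Fintype.card Q ∧ deltaStar δ p w = some q :=
    let ⟨_, _, hw⟩ := hconn p hp q hq
    exists_deltaStar_eq_some_length_lt_card δ hw
  obtain ⟨p, hp, a, q, hq, hδ⟩ := hint
  obtain ⟨v, hloop, hvlen, hcover⟩ :=
    exists_cycle_through_internalTransitions δ hshort (p := p) (a := a) ⟨hp, q, hq, hδ⟩
  obtain ⟨x, y, hxy, -⟩ := hcover (p, a) ⟨hp, q, hq, hδ⟩
  have hv : v ≠ [] := by simp [hxy]
  obtain ⟨w, s, hs, hw⟩ := hreach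
  obtain ⟨ws, -, hws⟩ := hshort s hs p hp
  obtain ⟨u, hulen, hu⟩ := exists_deltaStar_eq_some_length_lt_card δ
    ((deltaStar_append_of_eq_some δ hw ws).trans hws)
  refine ⟨u, v, hv, hulen, hvlen.trans_eq (by ring), runP_upWord_ne_none δ hv hu hloop,
    fun p' hp' a' q' hq' hδ' => ?_⟩
  obtain ⟨x', y', hxy', hx'⟩ := hcover (p', a') ⟨hp', q', hq', hδ'⟩
  exact infinite_setOf_runP_upWord_eq δ hv hu hloop hxy' hx'
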